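/- If r : [0,∞) → ℝ is continuous with r(0) < 0, then either H(r)(τ) = h₁ for all τ ≥ 0, or there exists a unique switching time t* > 0 such that H(r)(τ) = h₁ for τ < t*, H(r)(τ) = −h₂ for τ ≥ t*, and r(t*) = 0. -/
import Mathlib


open scoped Classical

noncomputable def relay (h₁ h₂ : ℝ) (r : ℝ → ℝ) (τ : ℝ) : ℝ :=
  if ∀ s ∈ Set.Icc 0 τ, r s < 0 then h₁ else -h₂

/-- If `r 0 < 0` then either the relay never switches, or there is a unique switching
time `t* > 0`: the output is `h₁` before `t*`, `-h₂` from `t*` on, and `r t* = 0`. -/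
theorem relay_unique_switching_time (h₁ h₂ : ℝ) (hh₁ : 0 < h₁) (hh₂ : 0 ≤ h₂)
    (r : ℝ → ℝ) (hr : ContinuousOn r (Set.Ici 0)) (hr0 : r 0 < 0) :
    (∀ τ : ℝ, 0 ≤ τ → relay h₁ h₂ r τ = h₁) ∨
    (∃! tstar : ℝ, 0 < tstar ∧
      (∀ τ : ℝ, 0 ≤ τ → τ < tstar → relay h₁ h₂ r τ = h₁) ∧
      (∀ τ : ℝ, tstar ≤ τ → relay h₁ h₂ r τ = -h₂) ∧
      r tstar = 0) := by
  by_cases hA : ∀ τ : ℝ, 0 ≤ τ → ∀ s ∈ Set.Icc (0:ℝ) τ, r s < 0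
  · left
    intro τ hτ
    rw [relay, if_pos (hA τ hτ)]
  · right
    push_neg at hA
    obtain ⟨τ₀, hτ₀, s₀, hs₀, hrs₀⟩ := hA
    set S : Set ℝ := {t | 0 ≤ t ∧ 0 ≤ r t} with hSdef
    have hne : S.Nonempty := ⟨s₀, hs₀.1, hrs₀⟩
    have hbdd : BddBelow S := ⟨0, fun t ht => ht.1⟩
    set t₀ := sInf S with ht₀def
    have ht₀0 : 0 ≤ t₀ := le_csInf hne fun t ht => ht.1
    have hneg : ∀ s, 0 ≤ s → s < t₀ → r s < 0 := by
      intro s hs hst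
      by_contra h
      push_neg at h
      exact absurd (csInf_le hbdd ⟨hs, h⟩) (not_le.mpr hst)
    -- t₀ > 0
    have ht₀pos : 0 < t₀ := by
      have h0 : ContinuousWithinAt r (Set.Ici 0) 0 := hr 0 Set.self_mem_Ici
      have hmem : {x | r x < 0} ∈ nhdsWithin 0 (Set.Ici 0) := h0 (Iio_mem_nhds hr0)
      rw [Metric.mem_nhdsWithin_iff] at hmem
      obtain ⟨ε, hε, hball⟩ := hmem
      have hlb : ε ≤ t₀ := by
        apply le_csInf hne
        intro t ht
        by_contra hlt
        push_neg at hlt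
        have : t ∈ Metric.ball (0:ℝ) ε ∩ Set.Ici 0 := by
          constructor
          · simp [Real.dist_eq, abs_of_nonneg ht.1, hlt]
          · exact ht.1
        exact absurd ht.2 (not_le.mpr (hball this))
      linarith
    have hcw : ContinuousWithinAt r (Set.Ici 0) t₀ := hr t₀ ht₀0
    have hrle : r t₀ ≤ 0 := by
      by_contra h
      push_neg at h
      have hmem : {x | 0 < r x} ∈ nhdsWithin t₀ (Set.Ici 0) := hcw (Ioi_mem_nhds h)
      rw [Metric.mem_nhdsWithin_iff] at hmem
      obtain ⟨ε, hε, hball⟩ := hmem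
      set s := max 0 (t₀ - ε / 2) with hs
      have hs0 : 0 ≤ s := le_max_left _ _
      have hslt : s < t₀ := by
        apply max_lt ht₀pos
        linarith
      have hsball : s ∈ Metric.ball t₀ ε ∩ Set.Ici 0 := by
        constructor
        · have h1 : t₀ - ε / 2 ≤ s := le_max_right _ _
          simp only [Metric.mem_ball, Real.dist_eq]
          rw [abs_of_nonpos (by linarith)]
          linarith
        · exact hs0
      exact absurd (hneg s hs0 hslt) (not_lt.mpr (le_of_lt (hball hsball)))
    have hrge : 0 ≤ r t₀ := by
      by_contra h
      push_neg at h
      have hmem : {x | r x < 0} ∈ nhdsWithin t₀ (Set.Ici 0) := hcw (Iio_mem_nhds h)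
      rw [Metric.mem_nhdsWithin_iff] at hmem
      obtain ⟨ε, hε, hball⟩ := hmem
      have hlb : t₀ + ε / 2 ≤ t₀ := by
        apply le_csInf hne
        intro t ht
        by_contra hlt
        push_neg at hlt
        have htge : t₀ ≤ t := by
          by_contra h'
          push_neg at h'
          exact absurd ht.2 (not_le.mpr (hneg t ht.1 h'))
        have : t ∈ Metric.ball t₀ ε ∩ Set.Ici 0 := by
          constructor
          · simp only [Metric.mem_ball, Real.dist_eq]
            rw [abs_of_nonneg (by linarith)]
            linarith
          · exact ht.1
        exact absurd ht.2 (not_le.mpr (hball this))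
      linarith
    have hrt₀ : r t₀ = 0 := le_antisymm hrle hrge
    have hbefore : ∀ τ : ℝ, 0 ≤ τ → τ < t₀ → relay h₁ h₂ r τ = h₁ := by
      intro τ hτ hτlt
      have : ∀ s ∈ Set.Icc (0:ℝ) τ, r s < 0 := fun s hs =>
        hneg s hs.1 (lt_of_le_of_lt hs.2 hτlt)
      rw [relay, if_pos this]
    have hafter : ∀ τ : ℝ, t₀ ≤ τ → relay h₁ h₂ r τ = -h₂ := by
      intro τ hτ
      have : ¬ ∀ s ∈ Set.Icc (0:ℝ) τ, r s < 0 := by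
        intro h
        have := h t₀ ⟨ht₀0, hτ⟩
        rw [hrt₀] at this
        exact lt_irrefl 0 this
      rw [relay, if_neg this]
    refine ⟨t₀, ⟨ht₀pos, hbefore, hafter, hrt₀⟩, ?_⟩
    rintro t' ⟨ht'pos, hb', ha', hrt'⟩
    rcases lt_trichotomy t' t₀ with hlt | heq | hgt
    · exact absurd hrt' (ne_of_lt (hneg t' (le_of_lt ht'pos) hlt))
    · exact heq
    · have h1 : relay h₁ h₂ r t₀ = h₁ := hb' t₀ ht₀0 hgt
      have h2 : relay h₁ h₂ r t₀ = -h₂ := hafter t₀ le_rfl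
      rw [h1] at h2
      linarith
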